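/- arXiv:1303.0171 — 2 statements merged into one kernel-verified Lean document; each statement's English description precedes it below -/
import Mathlib

section
/- For a G-space X, the following are equivalent: (1) STC_G(X) ≤ n; (2) there exist n open G×G-invariant sets U_1,…,U_n covering X×X and G×G-maps s̄_i:U_i→PX×_{ℸ(X)}PX such that p∘s̄_i is G×G-homotopic to the inclusion U_i⊆X×X. -/
/-!
A `G × G`-compression `H` of `U` into `ℸ(X)` splits into its two coordinates; running the second
one backwards gives paths `(γ, δ)` with `(γ 1, δ 0) = H(u, 1) ∈ ℸ(X)`, i.e. `G·γ(1) = G·δ(0)`, so an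
equivariant section `s̄` of `p` over `U` with `p ∘ s̄` equal to the inclusion. Conversely, given `s̄`
and a homotopy `K` from `p ∘ s̄` to the inclusion, run `K` backwards and then slide the endpoints
`(γ 0, δ 1)` along `(γ t, δ (1 - t))` to `(γ 1, δ 0) ∈ ℸ(X)`. Equivariance of every stage is a
property preserved by reversing and concatenating homotopies (`HomotopyWith`).
-/

open unitInterval Set

namespace PaperTC

variable (G : Type*) {X : Type*} [Group G] [TopologicalSpace X] [MulAction G X]

/-- A set is invariant under the `G`-action. -/
def InvSet (U : Set X) : Prop := ∀ (g : G), ∀ x ∈ U, g • x ∈ U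

/-- An open invariant set `U` is `G`-compressible into `A`: the inclusion `U ⊆ X` is
`G`-homotopic to a map with values in `A`. -/
def Compressible (A U : Set X) : Prop :=
  ∃ H : C(↥U × I, X),
    (∀ u : ↥U, H (u, 0) = (u : X)) ∧
    (∀ u : ↥U, H (u, 1) ∈ A) ∧
    (∀ (g : G) (u v : ↥U) (t : I), (v : X) = g • (u : X) → H (v, t) = g • H (u, t))

/-- `X` can be covered by `n` open invariant sets, each `G`-compressible into `A`. -/
def CatLE (A : Set X) (n : ℕ) : Prop :=
  ∃ U : Fin n → Set X, (⋃ i, U i) = Set.univ ∧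
    ∀ i, IsOpen (U i) ∧ InvSet G (U i) ∧ Compressible G A (U i)

/-- The `A`-Lusternik–Schnirelmann `G`-category of `X`. -/
noncomputable def Cat (A : Set X) : ℕ∞ :=
  sInf {n : ℕ∞ | ∃ m : ℕ, n = (m : ℕ∞) ∧ CatLE G A m}


/-- The action of `G × H` on `X × Y` by `(g,h)•(x,y) = (g•x, h•y)`. -/
instance prodMulAction {G H X Y : Type*} [Monoid G] [Monoid H]
    [MulAction G X] [MulAction H Y] : MulAction (G × H) (X × Y) where
  smul p z := (p.1 • z.1, p.2 • z.2)
  one_smul _ := Prod.ext (one_smul _ _) (one_smul _ _)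
  mul_smul _ _ _ := Prod.ext (mul_smul _ _ _) (mul_smul _ _ _)

@[simp] theorem prod_smul_def {G H X Y : Type*} [Monoid G] [Monoid H]
    [MulAction G X] [MulAction H Y] (p : G × H) (z : X × Y) :
    p • z = (p.1 • z.1, p.2 • z.2) := rfl

/-- `ℸ(X) = (G×G)·Δ(X) ⊆ X × X`, the saturation of the diagonal under the
`G × G`-action. -/
def Daleth (G : Type*) {X : Type*} [Group G] [MulAction G X] : Set (X × X) :=
  {p | ∃ (g₁ g₂ : G) (x : X), p = (g₁ • x, g₂ • x)}

/-- The symmetric topological complexity `STC_G(X) = _{ℸ(X)} cat_{G×G}(X × X)`. -/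
noncomputable def STC (G : Type*) (X : Type*) [Group G] [TopologicalSpace X]
    [MulAction G X] : ℕ∞ :=
  Cat (G × G) (Daleth G (X := X))

/-- The fibered product `PX ×_{ℸ(X)} PX = {(γ, δ) : G·γ(1) = G·δ(0)}`. -/
def PPair (G : Type*) (X : Type*) [Group G] [TopologicalSpace X] [MulAction G X] :=
  {p : C(I, X) × C(I, X) // MulAction.orbit G (p.1 1) = MulAction.orbit G (p.2 0)}

instance {G X : Type*} [Group G] [TopologicalSpace X] [MulAction G X] :
    TopologicalSpace (PPair G X) :=
  instTopologicalSpaceSubtype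

/-- The endpoint map `p : PX ×_{ℸ(X)} PX → X × X`, `(γ, δ) ↦ (γ(0), δ(1))`. -/
def pPair {G X : Type*} [Group G] [TopologicalSpace X] [MulAction G X]
    (e : PPair G X) : X × X :=
  (e.1.1 0, e.1.2 1)

theorem mem_daleth_iff {G X : Type*} [Group G] [MulAction G X] {p : X × X} :
    p ∈ Daleth G ↔ MulAction.orbit G p.1 = MulAction.orbit G p.2 := by
  constructor
  · rintro ⟨g₁, g₂, x, rfl⟩
    simp only [MulAction.orbit_smul]
  · intro h
    obtain ⟨g, hg⟩ : p.2 ∈ MulAction.orbit G p.1 := h ▸ MulAction.mem_orbit_self p.2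
    exact ⟨1, g, p.1, Prod.ext (one_smul G p.1).symm hg.symm⟩

def EquivariantOn {U : Set X} (f : C(U, X)) : Prop :=
  ∀ (g : G) (u v : U), (v : X) = g • (u : X) → f v = g • f u

theorem compressible_of_homotopyWith {A U : Set X} {f : C(U, X)}
    (F : ContinuousMap.HomotopyWith ⟨(↑), continuous_subtype_val⟩ f (EquivariantOn G))
    (hf : ∀ u, f u ∈ A) : Compressible G A U :=
  ⟨F.toContinuousMap.comp .prodSwap, F.apply_zero, fun u => (F.apply_one u).symm ▸ hf u,
    fun g u v t huv => F.prop t g u v huv⟩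

theorem continuous_pPair : Continuous (pPair : PPair G X → X × X) := by
  unfold pPair; fun_prop

def pPairEnds (e : PPair G X) : X × X := (e.1.1 1, e.1.2 0)

theorem continuous_pPairEnds : Continuous (pPairEnds G : PPair G X → X × X) := by
  unfold pPairEnds; fun_prop

theorem pPairEnds_mem_daleth (e : PPair G X) : pPairEnds G e ∈ Daleth G :=
  mem_daleth_iff.2 e.2

def pPairHomotopy :
    ContinuousMap.Homotopy ⟨pPair, continuous_pPair G (X := X)⟩
      ⟨pPairEnds G, continuous_pPairEnds G⟩ where
  toFun p := (p.2.1.1 p.1, p.2.1.2 (σ p.1))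
  continuous_toFun := by fun_prop
  map_zero_left _ := by simp [pPair]
  map_one_left _ := by simp [pPairEnds]

/-- `y ↦ (t ↦ (H (y, t)).1, t ↦ (H (y, 1 - t)).2)`. -/
def pPairOfHomotopy {Y : Type*} [TopologicalSpace Y] (H : C(Y × I, X × X))
    (hH : ∀ y, H (y, 1) ∈ Daleth G) : C(Y, PPair G X) where
  toFun y := ⟨((ContinuousMap.fst.comp H).curry y,
      (ContinuousMap.snd.comp (H.comp ((ContinuousMap.id Y).prodMap ⟨σ, continuous_symm⟩))).curry y),
    by simpa using mem_daleth_iff.1 (hH y)⟩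
  continuous_toFun := by
    refine Continuous.subtype_mk (Continuous.prodMk ?_ ?_) _ <;> exact ContinuousMap.continuous _

def HasEquivariantHomotopySection (U : Set (X × X)) : Prop :=
  ∃ s : C(↥U, PPair G X),
    (∀ (g : G × G) (u v : ↥U) (t : I), (v : X × X) = g • (u : X × X) →
      ((s v).1.1 t = g.1 • (s u).1.1 t) ∧ ((s v).1.2 t = g.2 • (s u).1.2 t)) ∧
    ∃ K : C(↥U × I, X × X),
      (∀ u : ↥U, K (u, 0) = pPair (s u)) ∧
      (∀ u : ↥U, K (u, 1) = (u : X × X)) ∧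
      (∀ (g : G × G) (u v : ↥U) (t : I), (v : X × X) = g • (u : X × X) →
        K (v, t) = g • K (u, t))

theorem hasEquivariantHomotopySection_of_compressible {U : Set (X × X)}
    (h : Compressible (G × G) (Daleth G) U) : HasEquivariantHomotopySection G U := by
  obtain ⟨H, hH0, hH1, hH⟩ := h
  refine ⟨pPairOfHomotopy G H hH1, fun g u v t huv => ?_,
    (ContinuousMap.mk Subtype.val continuous_subtype_val).comp .fst, fun u => ?_, fun _ => rfl,
    fun g u v t huv => huv⟩
  · exact ⟨congrArg Prod.fst (hH g u v t huv), congrArg Prod.snd (hH g u v (σ t) huv)⟩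
  · change (u : X × X) = ((H (u, 0)).1, (H (u, σ 1)).2)
    rw [symm_one, hH0]

theorem compressible_of_hasEquivariantHomotopySection {U : Set (X × X)}
    (h : HasEquivariantHomotopySection G U) : Compressible (G × G) (Daleth G) U := by
  obtain ⟨s, hs, K, hK0, hK1, hK⟩ := h
  let toInclusion : ContinuousMap.HomotopyWith
      ((ContinuousMap.mk pPair (continuous_pPair G)).comp s)
      ⟨(↑), continuous_subtype_val⟩ (EquivariantOn (G × G)) :=
    { toContinuousMap := K.comp .prodSwap
      map_zero_left := hK0
      map_one_left := hK1
      prop' := fun t g u v huv => hK g u v t huv }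
  let slide : ContinuousMap.HomotopyWith
      ((ContinuousMap.mk pPair (continuous_pPair G)).comp s)
      ((ContinuousMap.mk (pPairEnds G) (continuous_pPairEnds G)).comp s)
      (EquivariantOn (G × G)) :=
    { toHomotopy := (pPairHomotopy G).compContinuousMap s
      prop' := fun t g u v huv => Prod.ext (hs g u v t huv).1 (hs g u v (σ t) huv).2 }
  exact compressible_of_homotopyWith (G × G) (toInclusion.symm.trans slide)
    fun u => pPairEnds_mem_daleth G (s u)

theorem compressible_daleth_iff {U : Set (X × X)} :
    Compressible (G × G) (Daleth G) U ↔ HasEquivariantHomotopySection G U :=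
  ⟨hasEquivariantHomotopySection_of_compressible G,
    compressible_of_hasEquivariantHomotopySection G⟩

theorem stmt_13_general {G X : Type*} [Group G]
    [TopologicalSpace X] [MulAction G X] (n : ℕ) :
    CatLE (G × G) (Daleth G (X := X)) n ↔
      (∃ U : Fin n → Set (X × X), (⋃ i, U i) = Set.univ ∧
        ∀ i, IsOpen (U i) ∧ InvSet (G × G) (U i) ∧
          ∃ s : C(↥(U i), PPair G X),
            (∀ (g : G × G) (u v : ↥(U i)) (t : I), (v : X × X) = g • (u : X × X) →
              ((s v).1.1 t = g.1 • (s u).1.1 t) ∧ ((s v).1.2 t = g.2 • (s u).1.2 t)) ∧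
            ∃ K : C(↥(U i) × I, X × X),
              (∀ u : ↥(U i), K (u, 0) = pPair (s u)) ∧
              (∀ u : ↥(U i), K (u, 1) = (u : X × X)) ∧
              (∀ (g : G × G) (u v : ↥(U i)) (t : I), (v : X × X) = g • (u : X × X) →
                K (v, t) = g • K (u, t))) :=
  exists_congr fun _ => and_congr_right fun _ => forall_congr' fun _ =>
    and_congr_right fun _ => and_congr_right fun _ => compressible_daleth_iff G

/-- `STC_G(X) ≤ n` iff `X × X` can be covered by `n` open
`G × G`-invariant sets `U_i` admitting `G × G`-maps `s̄_i : U_i → PX ×_{ℸ(X)} PX`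
with `p ∘ s̄_i` `G × G`-homotopic to the inclusion `U_i ⊆ X × X`. -/
theorem stmt_13 {G X : Type*} [Group G] [TopologicalSpace G] [CompactSpace G]
    [TopologicalSpace X] [MulAction G X] [ContinuousSMul G X] (n : ℕ) :
    CatLE (G × G) (Daleth G (X := X)) n ↔
      (∃ U : Fin n → Set (X × X), (⋃ i, U i) = Set.univ ∧
        ∀ i, IsOpen (U i) ∧ InvSet (G × G) (U i) ∧
          ∃ s : C(↥(U i), PPair G X),
            (∀ (g : G × G) (u v : ↥(U i)) (t : I), (v : X × X) = g • (u : X × X) →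
              ((s v).1.1 t = g.1 • (s u).1.1 t) ∧ ((s v).1.2 t = g.2 • (s u).1.2 t)) ∧
            ∃ K : C(↥(U i) × I, X × X),
              (∀ u : ↥(U i), K (u, 0) = pPair (s u)) ∧
              (∀ u : ↥(U i), K (u, 1) = (u : X × X)) ∧
              (∀ (g : G × G) (u v : ↥(U i)) (t : I), (v : X × X) = g • (u : X × X) →
                K (v, t) = g • K (u, t))) :=
  stmt_13_general n

end PaperTC
end

section
/- If X G-dominates Y (there are G-maps f:X→Y and g:Y→X with f∘g G-homotopic to id_Y), then STC_G(X) ≥ STC_G(Y) and TC_G(X) ≥ TC_G(Y). -/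
open unitInterval Set

namespace PaperTC

variable (G : Type*) {X : Type*} [Group G] [TopologicalSpace X] [MulAction G X]

/-- `TC_G(X) ≤ n`: `X × X` (diagonal `G`-action) is covered by `n` open invariant
sets each admitting a `G`-equivariant section of the path fibration `p : PX → X × X`. -/
def TCGLE (G : Type*) (X : Type*) [Group G] [TopologicalSpace X] [MulAction G X]
    (n : ℕ) : Prop :=
  ∃ U : Fin n → Set (X × X), (⋃ i, U i) = Set.univ ∧
    ∀ i, IsOpen (U i) ∧ InvSet G (U i) ∧
      ∃ s : C(↥(U i), C(I, X)),
        (∀ u : ↥(U i), (s u 0, s u 1) = (u : X × X)) ∧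
        (∀ (g : G) (u v : ↥(U i)) (t : I), (v : X × X) = g • (u : X × X) →
          s v t = g • s u t)

/-- The equivariant topological complexity `TC_G(X)`. -/
noncomputable def TCG (G : Type*) (X : Type*) [Group G] [TopologicalSpace X]
    [MulAction G X] : ℕ∞ :=
  sInf {n : ℕ∞ | ∃ m : ℕ, n = (m : ℕ∞) ∧ TCGLE G X m}

section Steps

variable {G X Y : Type*} [Group G]
    [TopologicalSpace X] [MulAction G X] [TopologicalSpace Y] [MulAction G Y]

/-- Swap helper. -/
def swapCM {α β : Type*} [TopologicalSpace α] [TopologicalSpace β] :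
    C(α × β, β × α) := ⟨Prod.swap, continuous_swap⟩

lemma stc_step (f : C(X, Y)) (k : C(Y, X)) (H : C(Y × I, Y))
    (hf : ∀ (g : G) (x : X), f (g • x) = g • f x)
    (hk : ∀ (g : G) (y : Y), k (g • y) = g • k y)
    (H0 : ∀ y, H (y, 0) = f (k y)) (H1 : ∀ y, H (y, 1) = y)
    (Hequiv : ∀ (g : G) (y : Y) (t : I), H (g • y, t) = g • H (y, t))
    (m : ℕ) (h : CatLE (G × G) (Daleth G (X := X)) m) :
    CatLE (G × G) (Daleth G (X := Y)) m := by
  obtain ⟨U, hcov, hprop⟩ := h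
  have kkc : Continuous fun p : Y × Y => (k p.1, k p.2) :=
    (k.continuous.comp continuous_fst).prodMk (k.continuous.comp continuous_snd)
  refine ⟨fun i => (fun p : Y × Y => (k p.1, k p.2)) ⁻¹' U i, ?_, fun i =>
    ⟨((hprop i).1).preimage kkc, ?_, ?_⟩⟩
  · ext p
    have : (k p.1, k p.2) ∈ ⋃ i, U i := hcov ▸ mem_univ _
    simp only [mem_iUnion, mem_preimage, mem_univ, iff_true]
    simpa using this
  · intro g p hp
    simp only [mem_preimage] at hp ⊢
    have : ((k ((g • p).1), k ((g • p).2)) : X × X) = g • (k p.1, k p.2) := by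
      simp [prod_smul_def, hk]
    rw [this]
    exact (hprop i).2.1 g _ hp
  · obtain ⟨HU, h0, h1, he⟩ := (hprop i).2.2
    set V : Set (Y × Y) := (fun p : Y × Y => (k p.1, k p.2)) ⁻¹' U i with hV
    have hφc : Continuous fun v : ↥V => (⟨(k v.val.1, k v.val.2), v.2⟩ : ↥(U i)) :=
      Continuous.subtype_mk (kkc.comp continuous_subtype_val) _
    set φ : C(↥V, ↥(U i)) := ⟨_, hφc⟩ with hφ
    set inc : C(↥V, Y × Y) := ⟨Subtype.val, continuous_subtype_val⟩ with hinc
    set mid : C(↥V, Y × Y) := ⟨fun v => (f (k v.val.1), f (k v.val.2)),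
      (f.continuous.comp (k.continuous.comp continuous_subtype_val.fst)).prodMk
        (f.continuous.comp (k.continuous.comp continuous_subtype_val.snd))⟩
      with hmid
    have hfv : Continuous fun v : ↥V => HU (φ v, 1) :=
      HU.continuous.comp (φ.continuous.prodMk continuous_const)
    set fin : C(↥V, Y × Y) :=
      ⟨fun v => (f (HU (φ v, 1)).1, f (HU (φ v, 1)).2),
        (f.continuous.comp hfv.fst).prodMk (f.continuous.comp hfv.snd)⟩ with hfin
    have hσc : Continuous fun q : I × ↥V => σ q.1 :=
      unitInterval.continuous_symm.comp continuous_fst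
    have hv1 : Continuous fun q : I × ↥V => q.2.val.1 :=
      (continuous_subtype_val.comp continuous_snd).fst
    have hv2 : Continuous fun q : I × ↥V => q.2.val.2 :=
      (continuous_subtype_val.comp continuous_snd).snd
    set A : inc.Homotopy mid :=
      { toFun := fun q => (H (q.2.val.1, σ q.1), H (q.2.val.2, σ q.1))
        continuous_toFun := (H.continuous.comp (hv1.prodMk hσc)).prodMk
          (H.continuous.comp (hv2.prodMk hσc))
        map_zero_left := fun v => by simp [hinc, H1]
        map_one_left := fun v => by simp [hmid, H0] } with hA
    have hqc : Continuous fun q : I × ↥V => HU (φ q.2, q.1) :=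
      HU.continuous.comp ((φ.continuous.comp continuous_snd).prodMk continuous_fst)
    set B : mid.Homotopy fin :=
      { toFun := fun q => (f (HU (φ q.2, q.1)).1, f (HU (φ q.2, q.1)).2)
        continuous_toFun := (f.continuous.comp hqc.fst).prodMk
          (f.continuous.comp hqc.snd)
        map_zero_left := fun v => by
          show (f (HU (φ v, 0)).1, f (HU (φ v, 0)).2) = mid v
          rw [h0 (φ v)]; rfl
        map_one_left := fun v => rfl } with hB
    refine ⟨(A.trans B).toContinuousMap.comp swapCM, ?_, ?_, ?_⟩
    · intro v
      exact (A.trans B).apply_zero v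
    · intro v
      have h11 : (A.trans B).toContinuousMap.comp swapCM (v, 1) = fin v :=
        (A.trans B).apply_one v
      rw [h11]
      obtain ⟨g₁, g₂, x, hx⟩ := h1 (φ v)
      exact ⟨g₁, g₂, f x, by simp [hfin, hx, hf, prod_smul_def]⟩
    · intro g u v t hvu
      have hc1 : v.val.1 = g.1 • u.val.1 := by rw [hvu]; rfl
      have hc2 : v.val.2 = g.2 • u.val.2 := by rw [hvu]; rfl
      have hAe : ∀ s : I, A (s, v) = g • A (s, u) := by
        intro s
        show (H (v.val.1, σ s), H (v.val.2, σ s)) =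
          g • (H (u.val.1, σ s), H (u.val.2, σ s))
        rw [prod_smul_def, hc1, hc2, Hequiv, Hequiv]
      have hφe : (φ v : X × X) = g • (φ u : X × X) := by
        show ((k v.val.1, k v.val.2) : X × X) = g • (k u.val.1, k u.val.2)
        rw [prod_smul_def, hc1, hc2, hk, hk]
      have hBe : ∀ s : I, B (s, v) = g • B (s, u) := by
        intro s
        have hh := he g (φ u) (φ v) s hφe
        show (f (HU (φ v, s)).1, f (HU (φ v, s)).2) =
          g • (f (HU (φ u, s)).1, f (HU (φ u, s)).2)
        rw [hh]
        simp [prod_smul_def, hf]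
      show (A.trans B) (t, v) = g • (A.trans B) (t, u)
      rw [ContinuousMap.Homotopy.trans_apply, ContinuousMap.Homotopy.trans_apply]
      split_ifs with ht
      · exact hAe _
      · exact hBe _

lemma tcg_step (f : C(X, Y)) (k : C(Y, X)) (H : C(Y × I, Y))
    (hf : ∀ (g : G) (x : X), f (g • x) = g • f x)
    (hk : ∀ (g : G) (y : Y), k (g • y) = g • k y)
    (H0 : ∀ y, H (y, 0) = f (k y)) (H1 : ∀ y, H (y, 1) = y)
    (Hequiv : ∀ (g : G) (y : Y) (t : I), H (g • y, t) = g • H (y, t))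
    (m : ℕ) (h : TCGLE G X m) : TCGLE G Y m := by
  obtain ⟨U, hcov, hprop⟩ := h
  have kkc : Continuous fun p : Y × Y => (k p.1, k p.2) :=
    (k.continuous.comp continuous_fst).prodMk (k.continuous.comp continuous_snd)
  refine ⟨fun i => (fun p : Y × Y => (k p.1, k p.2)) ⁻¹' U i, ?_, fun i =>
    ⟨((hprop i).1).preimage kkc, ?_, ?_⟩⟩
  · ext p
    have : (k p.1, k p.2) ∈ ⋃ i, U i := hcov ▸ mem_univ _
    simp only [mem_iUnion, mem_preimage, mem_univ, iff_true]
    simpa using this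
  · intro g p hp
    simp only [mem_preimage] at hp ⊢
    have : ((k ((g • p).1), k ((g • p).2)) : X × X) = g • (k p.1, k p.2) := by
      simp [Prod.smul_mk, hk]
    rw [this]
    exact (hprop i).2.1 g _ hp
  · obtain ⟨s, hs0, hse⟩ := (hprop i).2.2
    set V : Set (Y × Y) := (fun p : Y × Y => (k p.1, k p.2)) ⁻¹' U i with hV
    have hφc : Continuous fun v : ↥V => (⟨(k v.val.1, k v.val.2), v.2⟩ : ↥(U i)) :=
      Continuous.subtype_mk (kkc.comp continuous_subtype_val) _
    set φ : C(↥V, ↥(U i)) := ⟨_, hφc⟩ with hφ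
    set m₀ : C(↥V, Y) := ⟨fun v => v.val.1, continuous_subtype_val.fst⟩ with hm₀
    set m₁ : C(↥V, Y) := ⟨fun v => f (k v.val.1),
      f.continuous.comp (k.continuous.comp continuous_subtype_val.fst)⟩ with hm₁
    set m₂ : C(↥V, Y) := ⟨fun v => f (k v.val.2),
      f.continuous.comp (k.continuous.comp continuous_subtype_val.snd)⟩ with hm₂
    set m₃ : C(↥V, Y) := ⟨fun v => v.val.2, continuous_subtype_val.snd⟩ with hm₃
    have hsf : ∀ v : ↥V, s (φ v) 0 = k v.val.1 := fun v =>
      congrArg Prod.fst (hs0 (φ v))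
    have hss : ∀ v : ↥V, s (φ v) 1 = k v.val.2 := fun v =>
      congrArg Prod.snd (hs0 (φ v))
    have hσc : Continuous fun q : I × ↥V => σ q.1 :=
      unitInterval.continuous_symm.comp continuous_fst
    have hv1 : Continuous fun q : I × ↥V => q.2.val.1 :=
      (continuous_subtype_val.comp continuous_snd).fst
    have hv2 : Continuous fun q : I × ↥V => q.2.val.2 :=
      (continuous_subtype_val.comp continuous_snd).snd
    set A : m₀.Homotopy m₁ :=
      { toFun := fun q => H (q.2.val.1, σ q.1)
        continuous_toFun := H.continuous.comp (hv1.prodMk hσc)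
        map_zero_left := fun v => by simp [hm₀, H1]
        map_one_left := fun v => by simp [hm₁, H0] } with hA
    set B : m₁.Homotopy m₂ :=
      { toFun := fun q => f (s (φ q.2) q.1)
        continuous_toFun := by
          apply f.continuous.comp
          exact ContinuousEval.continuous_eval.comp
            (((s.continuous.comp (φ.continuous.comp continuous_snd)).prodMk
              continuous_fst))
        map_zero_left := fun v => by simp [hm₁, hsf v]
        map_one_left := fun v => by simp [hm₂, hss v] } with hB
    set C : m₂.Homotopy m₃ :=
      { toFun := fun q => H (q.2.val.2, q.1)
        continuous_toFun := H.continuous.comp (hv2.prodMk continuous_fst)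
        map_zero_left := fun v => by simp [hm₂, H0]
        map_one_left := fun v => by simp [hm₃, H1] } with hC
    refine ⟨(((A.trans B).trans C).toContinuousMap.comp swapCM).curry, ?_, ?_⟩
    · intro v
      have e0 : ((A.trans B).trans C) (0, v) = m₀ v := ((A.trans B).trans C).apply_zero v
      have e1 : ((A.trans B).trans C) (1, v) = m₃ v := ((A.trans B).trans C).apply_one v
      show ((((A.trans B).trans C) (0, v)), (((A.trans B).trans C) (1, v))) = v.val
      rw [e0, e1]
      rfl
    · intro g u v t hvu
      have hc1 : v.val.1 = g • u.val.1 := by rw [hvu, Prod.smul_fst]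
      have hc2 : v.val.2 = g • u.val.2 := by rw [hvu, Prod.smul_snd]
      have hφe : (φ v : X × X) = g • (φ u : X × X) := by
        show ((k v.val.1, k v.val.2) : X × X) = g • (k u.val.1, k u.val.2)
        rw [Prod.smul_mk, hc1, hc2, hk, hk]
      have hAe : ∀ r : I, A (r, v) = g • A (r, u) := by
        intro r
        show H (v.val.1, σ r) = g • H (u.val.1, σ r)
        rw [hc1, Hequiv]
      have hBe : ∀ r : I, B (r, v) = g • B (r, u) := by
        intro r
        show f (s (φ v) r) = g • f (s (φ u) r)
        rw [hse g (φ u) (φ v) r hφe, hf]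
      have hCe : ∀ r : I, C (r, v) = g • C (r, u) := by
        intro r
        show H (v.val.2, r) = g • H (u.val.2, r)
        rw [hc2, Hequiv]
      show ((A.trans B).trans C) (t, v) = g • ((A.trans B).trans C) (t, u)
      rw [ContinuousMap.Homotopy.trans_apply, ContinuousMap.Homotopy.trans_apply]
      split_ifs with h1
      · rw [ContinuousMap.Homotopy.trans_apply, ContinuousMap.Homotopy.trans_apply]
        split_ifs with h2
        · exact hAe _
        · exact hBe _
      · exact hCe _

end Steps

/-- if `X` `G`-dominates `Y` (there are `G`-maps `f : X → Y`,
`k : Y → X` with `f ∘ k` `G`-homotopic to `id_Y`), then `STC_G(X) ≥ STC_G(Y)` and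
`TC_G(X) ≥ TC_G(Y)`. -/
theorem stmt_18 {G X Y : Type*} [Group G] [TopologicalSpace G] [CompactSpace G]
    [TopologicalSpace X] [MulAction G X] [TopologicalSpace Y] [MulAction G Y]
    (f : C(X, Y)) (hf : ∀ (g : G) (x : X), f (g • x) = g • f x)
    (k : C(Y, X)) (hk : ∀ (g : G) (y : Y), k (g • y) = g • k y)
    (H : C(Y × I, Y))
    (H0 : ∀ y, H (y, 0) = f (k y)) (H1 : ∀ y, H (y, 1) = y)
    (Hequiv : ∀ (g : G) (y : Y) (t : I), H (g • y, t) = g • H (y, t)) :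
    STC G Y ≤ STC G X ∧ TCG G Y ≤ TCG G X := by
  constructor
  · refine sInf_le_sInf ?_
    rintro n ⟨m, rfl, hm⟩
    exact ⟨m, rfl, stc_step f k H hf hk H0 H1 Hequiv m hm⟩
  · refine sInf_le_sInf ?_
    rintro n ⟨m, rfl, hm⟩
    exact ⟨m, rfl, tcg_step f k H hf hk H0 H1 Hequiv m hm⟩

end PaperTC
end
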